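/- (Grönwall-type lemma with weakly singular kernel.) Fix 0 ≤ s < T and constants C₀ ≥ 0 and c ≥ 0. Suppose A : [s,T] → [0,∞) is measurable, integrable on [s,T], and satisfies A(t) ≤ C₀·(t−s)^{−1/2} + c·∫ₛᵗ A(θ)·(t−θ)^{−1/4} dθ for all t ∈ (s,T]. Then there exists a constant C > 0, depending only on T, C₀ and c, such that A(t) ≤ C·(t−s)^{−1/2} for all t ∈ (s,T]. -/

import Mathlib

open Real MeasureTheory Set Topology
open scoped ENNReal

/-!
Substituting the inequality into its own integral term once replaces the kernel
`(t - θ)^(-1/4)` by its self-convolution and the source `(θ - s)^(-1/2)` by its convolution with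
the kernel. Both are Beta-type integrals `∫ₐᵇ (θ - a)^p (b - θ)^q dθ ≲ (b - a)^(p + q + 1)`,
so they are bounded by `(t - σ)^(1/2) ≤ T^(1/2)` and `(t - s)^(1/4) ≤ T^(1/4)`. The iterated
inequality `A t ≤ C₀ (t - s)^(-1/2) + M + L ∫ₛᵗ A` has a bounded kernel, so the primitive of `A`
satisfies a classical integral Grönwall inequality and is bounded by a constant `B`; substituting
`B` back gives the claim.

The substitution is carried out with lower Lebesgue integrals, since `A θ (t - θ)^(-1/4)` need not
be integrable; where it is not, the Bochner integral in the hypothesis is `0`, and the hypothesis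
still implies its lower-integral form.
-/

theorem div_two_rpow_mul_rpow_le {x q r : ℝ} (hx : 0 < x) (hq : -1 ≤ q) :
    (x / 2) ^ q * x ^ r ≤ 2 * x ^ (q + r) := by
  have h2 : (2 : ℝ) ^ (-q) ≤ 2 := by
    simpa using rpow_le_rpow_of_exponent_le one_le_two (neg_le.mp hq)
  rw [div_rpow hx.le zero_le_two, rpow_add hx, div_eq_mul_inv, ← rpow_neg zero_le_two]
  calc x ^ q * 2 ^ (-q) * x ^ r = 2 ^ (-q) * (x ^ q * x ^ r) := by ring
    _ ≤ 2 * (x ^ q * x ^ r) := by gcongr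

theorem one_le_rpow_mul_rpow_neg {x y r : ℝ} (hx : 0 < x) (hxy : x ≤ y) (hr : 0 ≤ r) :
    1 ≤ y ^ r * x ^ (-r) := by
  rw [rpow_neg hx.le, ← div_eq_mul_inv, one_le_div (rpow_pos_of_pos hx r)]
  exact rpow_le_rpow hx.le hxy hr

/-- On `(a, b]` one of the two factors has its argument at least `(b - a) / 2`. -/
theorem rpow_sub_mul_rpow_sub_le {a b p q θ : ℝ} (hp : p ≤ 0) (hq : q ≤ 0) (hθ : θ ∈ Ioc a b) :
    (θ - a) ^ p * (b - θ) ^ q ≤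
      ((b - a) / 2) ^ q * (θ - a) ^ p + ((b - a) / 2) ^ p * (b - θ) ^ q := by
  obtain ⟨haθ, hθb⟩ := hθ
  have hX : 0 < (b - a) / 2 := by linarith
  rcases le_total θ ((a + b) / 2) with hθm | hθm
  · have := rpow_le_rpow_of_nonpos hX (by linarith : (b - a) / 2 ≤ b - θ) hq
    have := rpow_nonneg (sub_nonneg.2 hθb) q
    nlinarith [rpow_nonneg (sub_nonneg.2 haθ.le) p, rpow_nonneg hX.le p]
  · have := rpow_le_rpow_of_nonpos hX (by linarith : (b - a) / 2 ≤ θ - a) hp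
    have := rpow_nonneg (sub_nonneg.2 haθ.le) p
    nlinarith [rpow_nonneg (sub_nonneg.2 hθb) q, rpow_nonneg hX.le q]

theorem integral_rpow_sub_left {a b p : ℝ} (hp : -1 < p) :
    ∫ θ in a..b, (θ - a) ^ p = (b - a) ^ (p + 1) / (p + 1) := by
  rw [intervalIntegral.integral_comp_sub_right (· ^ p), integral_rpow (.inl hp), sub_self,
    zero_rpow (by linarith), sub_zero]

theorem integral_rpow_sub_right {a b p : ℝ} (hp : -1 < p) :
    ∫ θ in a..b, (b - θ) ^ p = (b - a) ^ (p + 1) / (p + 1) := by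
  rw [intervalIntegral.integral_comp_sub_left (· ^ p), integral_rpow (.inl hp), sub_self,
    zero_rpow (by linarith), sub_zero]

theorem intervalIntegrable_rpow_sub_left {a b p : ℝ} (hp : -1 < p) :
    IntervalIntegrable (fun θ => (θ - a) ^ p) volume a b := by
  simpa using
    (intervalIntegral.intervalIntegrable_rpow' (a := a - a) (b := b - a) hp).comp_sub_right a

theorem intervalIntegrable_rpow_sub_right {a b p : ℝ} (hp : -1 < p) :
    IntervalIntegrable (fun θ => (b - θ) ^ p) volume a b := by
  simpa using
    ((intervalIntegral.intervalIntegrable_rpow' (a := b - b) (b := b - a) hp).comp_sub_left b).symm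

theorem lintegral_rpow_sub_mul_rpow_sub_le {a b p q : ℝ} (hab : a ≤ b)
    (hp : -1 < p) (hp0 : p ≤ 0) (hq : -1 < q) (hq0 : q ≤ 0) :
    ∫⁻ θ in Ioc a b, ENNReal.ofReal ((θ - a) ^ p) * ENNReal.ofReal ((b - θ) ^ q) ≤
      ENNReal.ofReal (2 * (1 / (p + 1) + 1 / (q + 1)) * (b - a) ^ (p + q + 1)) := by
  rcases hab.eq_or_lt with rfl | hab
  · simp
  set X := (b - a) / 2
  set g : ℝ → ℝ := fun θ => X ^ q * (θ - a) ^ p + X ^ p * (b - θ) ^ q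
  have hg : IntervalIntegrable g volume a b :=
    ((intervalIntegrable_rpow_sub_left hp).const_mul _).add
      ((intervalIntegrable_rpow_sub_right hq).const_mul _)
  have hg0 : 0 ≤ᵐ[volume.restrict (Ioc a b)] g := by
    filter_upwards [ae_restrict_mem measurableSet_Ioc] with θ ⟨haθ, hθb⟩
    have hX : 0 ≤ X := by positivity
    simp only [g, Pi.zero_apply]
    positivity
  have hgint : ∫ θ in Ioc a b, g θ =
      X ^ q * (b - a) ^ (p + 1) / (p + 1) + X ^ p * (b - a) ^ (q + 1) / (q + 1) := by
    rw [← intervalIntegral.integral_of_le hab.le, intervalIntegral.integral_add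
      ((intervalIntegrable_rpow_sub_left hp).const_mul _)
      ((intervalIntegrable_rpow_sub_right hq).const_mul _),
      intervalIntegral.integral_const_mul, intervalIntegral.integral_const_mul,
      integral_rpow_sub_left hp, integral_rpow_sub_right hq]
    ring
  have hba : 0 < b - a := by linarith
  have h1 : X ^ q * (b - a) ^ (p + 1) ≤ 2 * (b - a) ^ (p + q + 1) := by
    convert div_two_rpow_mul_rpow_le (r := p + 1) hba hq.le using 3; ring
  have h2 : X ^ p * (b - a) ^ (q + 1) ≤ 2 * (b - a) ^ (p + q + 1) := by
    convert div_two_rpow_mul_rpow_le (r := q + 1) hba hp.le using 3; ring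
  have hp1 : 0 < p + 1 := by linarith
  have hq1 : 0 < q + 1 := by linarith
  calc ∫⁻ θ in Ioc a b, ENNReal.ofReal ((θ - a) ^ p) * ENNReal.ofReal ((b - θ) ^ q)
      ≤ ∫⁻ θ in Ioc a b, ENNReal.ofReal (g θ) :=
        setLIntegral_mono' measurableSet_Ioc fun θ hθ => by
          rw [← ENNReal.ofReal_mul (rpow_nonneg (sub_nonneg.2 hθ.1.le) _)]
          exact ENNReal.ofReal_le_ofReal (rpow_sub_mul_rpow_sub_le hp0 hq0 hθ)
    _ = ENNReal.ofReal (∫ θ in Ioc a b, g θ) :=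
        (ofReal_integral_eq_lintegral_ofReal hg.1 hg0).symm
    _ ≤ _ := by
        rw [hgint]
        gcongr
        calc _ ≤ 2 * (b - a) ^ (p + q + 1) / (p + 1) + 2 * (b - a) ^ (p + q + 1) / (q + 1) := by
              gcongr
          _ = _ := by ring

theorem lintegral_Ioc_lintegral_Ioc_swap {g : ℝ → ℝ → ℝ≥0∞} (hg : Measurable (Function.uncurry g))
    (s t : ℝ) :
    ∫⁻ θ in Ioc s t, ∫⁻ σ in Ioc s θ, g θ σ = ∫⁻ σ in Ioc s t, ∫⁻ θ in Ioc σ t, g θ σ := by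
  set G : ℝ → ℝ → ℝ≥0∞ := fun θ σ => {p : ℝ × ℝ | p.2 ≤ p.1}.indicator (Function.uncurry g) (θ, σ)
  have hG : Measurable (Function.uncurry G) :=
    hg.indicator (measurableSet_le measurable_snd measurable_fst)
  have hθ : ∀ θ ∈ Ioc s t, ∫⁻ σ in Ioc s θ, g θ σ = ∫⁻ σ in Ioc s t, G θ σ := by
    intro θ hθ
    have : ∀ σ, G θ σ = (Iic θ).indicator (g θ) σ := fun σ => by
      simp only [G, indicator_apply, mem_ofPred_eq, mem_Iic, Function.uncurry_apply_pair]
    simp_rw [this, lintegral_indicator measurableSet_Iic,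
      Measure.restrict_restrict measurableSet_Iic,
      Iic_inter_Ioc_of_le hθ.2]
  have hσ : ∀ σ ∈ Ioc s t, ∫⁻ θ in Ioc σ t, g θ σ = ∫⁻ θ in Ioc s t, G θ σ := by
    intro σ hσ
    have : ∀ θ, G θ σ = (Ici σ).indicator (g · σ) θ := fun θ => by
      simp only [G, indicator_apply, mem_ofPred_eq, mem_Ici, Function.uncurry_apply_pair]
    have hset : Ici σ ∩ Ioc s t = Icc σ t := Set.ext fun θ =>
      ⟨fun h => ⟨h.1, h.2.2⟩, fun h => ⟨h.1, hσ.1.trans_le h.1, h.2⟩⟩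
    simp_rw [this, lintegral_indicator measurableSet_Ici,
      Measure.restrict_restrict measurableSet_Ici,
      hset, restrict_Ioc_eq_restrict_Icc]
  rw [setLIntegral_congr_fun measurableSet_Ioc hθ, lintegral_lintegral_swap hG.aemeasurable,
    setLIntegral_congr_fun measurableSet_Ioc hσ]

theorem ofReal_integral_le_lintegral_ofReal {α : Type*} [MeasurableSpace α] {μ : Measure α}
    (f : α → ℝ) : ENNReal.ofReal (∫ x, f x ∂μ) ≤ ∫⁻ x, ENNReal.ofReal (f x) ∂μ := by
  by_cases hf : Integrable f μ
  · rw [integral_eq_lintegral_pos_part_sub_lintegral_neg_part hf]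
    exact (ENNReal.ofReal_le_ofReal (sub_le_self _ ENNReal.toReal_nonneg)).trans
      ENNReal.ofReal_toReal_le
  · simp [integral_undef hf]

noncomputable def weaklySingularIntegral (β s : ℝ) (f : ℝ → ℝ≥0∞) (t : ℝ) : ℝ≥0∞ :=
  ∫⁻ θ in Ioc s t, f θ * ENNReal.ofReal ((t - θ) ^ (-β))

theorem weaklySingularIntegral_rpow_neg_half_le {s t : ℝ} (hst : s ≤ t) :
    weaklySingularIntegral (1/4) s (fun θ => ENNReal.ofReal ((θ - s) ^ (-(1/2) : ℝ))) t ≤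
      ENNReal.ofReal (20/3 * (t - s) ^ (1/4 : ℝ)) := by
  rw [weaklySingularIntegral]
  convert lintegral_rpow_sub_mul_rpow_sub_le hst (p := -(1/2)) (q := -(1/4))
    (by norm_num) (by norm_num) (by norm_num) (by norm_num) using 3 <;> norm_num

theorem weaklySingularIntegral_weaklySingularIntegral_le {f : ℝ → ℝ≥0∞} (hf : Measurable f)
    (s t : ℝ) :
    weaklySingularIntegral (1/4) s (weaklySingularIntegral (1/4) s f) t ≤
      ENNReal.ofReal (16/3 * (t - s) ^ (1/2 : ℝ)) * ∫⁻ σ in Ioc s t, f σ := by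
  set k : ℝ → ℝ → ℝ≥0∞ := fun t θ => ENNReal.ofReal ((t - θ) ^ (-(1/4) : ℝ))
  have hkernel : ∀ σ ∈ Ioc s t, ∫⁻ θ in Ioc σ t, k θ σ * k t θ ≤
      ENNReal.ofReal (16/3 * (t - s) ^ (1/2 : ℝ)) := fun σ hσ =>
    calc ∫⁻ θ in Ioc σ t, k θ σ * k t θ
        ≤ ENNReal.ofReal (16/3 * (t - σ) ^ (1/2 : ℝ)) := by
          convert lintegral_rpow_sub_mul_rpow_sub_le hσ.2 (p := -(1/4)) (q := -(1/4))
            (by norm_num) (by norm_num) (by norm_num) (by norm_num) using 3 <;> norm_num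
      _ ≤ ENNReal.ofReal (16/3 * (t - s) ^ (1/2 : ℝ)) := by
          gcongr
          · linarith [hσ.2]
          · linarith [hσ.1]
  calc weaklySingularIntegral (1/4) s (weaklySingularIntegral (1/4) s f) t
      = ∫⁻ θ in Ioc s t, ∫⁻ σ in Ioc s θ, f σ * (k θ σ * k t θ) := by
        refine setLIntegral_congr_fun measurableSet_Ioc fun θ _ => ?_
        rw [weaklySingularIntegral, ← lintegral_mul_const' _ _ ENNReal.ofReal_ne_top]
        simp only [mul_assoc, k]
    _ = ∫⁻ σ in Ioc s t, f σ * ∫⁻ θ in Ioc σ t, k θ σ * k t θ := by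
        rw [lintegral_Ioc_lintegral_Ioc_swap (by simp only [k]; fun_prop)]
        refine setLIntegral_congr_fun measurableSet_Ioc fun σ _ => ?_
        exact lintegral_const_mul _ (by simp only [k]; fun_prop)
    _ ≤ ∫⁻ σ in Ioc s t, f σ * ENNReal.ofReal (16/3 * (t - s) ^ (1/2 : ℝ)) :=
        setLIntegral_mono' measurableSet_Ioc fun σ hσ => by grw [hkernel σ hσ]
    _ = _ := by rw [lintegral_mul_const' _ _ ENNReal.ofReal_ne_top, mul_comm]

theorem weaklySingularIntegral_le_of_le {f : ℝ → ℝ≥0∞} (hf : Measurable f) {s t C₀ c : ℝ}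
    (hst : s ≤ t)
    (h : ∀ θ ∈ Ioc s t, f θ ≤ ENNReal.ofReal (C₀ * (θ - s) ^ (-(1/2) : ℝ)) +
      ENNReal.ofReal c * weaklySingularIntegral (1/4) s f θ) :
    weaklySingularIntegral (1/4) s f t ≤
      ENNReal.ofReal (C₀ * (20/3 * (t - s) ^ (1/4 : ℝ))) +
        ENNReal.ofReal c *
          (ENNReal.ofReal (16/3 * (t - s) ^ (1/2 : ℝ)) * ∫⁻ σ in Ioc s t, f σ) := by
  set g : ℝ → ℝ≥0∞ := fun θ => ENNReal.ofReal ((θ - s) ^ (-(1/2) : ℝ))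
  set k : ℝ → ℝ≥0∞ := fun θ => ENNReal.ofReal ((t - θ) ^ (-(1/4) : ℝ))
  calc weaklySingularIntegral (1/4) s f t
      ≤ ∫⁻ θ in Ioc s t, (ENNReal.ofReal C₀ * (g θ * k θ) +
          ENNReal.ofReal c * (weaklySingularIntegral (1/4) s f θ * k θ)) := by
        refine setLIntegral_mono' measurableSet_Ioc fun θ hθ => ?_
        grw [h θ hθ, ENNReal.ofReal_mul' (rpow_nonneg (sub_nonneg.2 hθ.1.le) _)]
        simp only [add_mul, mul_assoc, g, k, le_refl]
    _ = ENNReal.ofReal C₀ * weaklySingularIntegral (1/4) s g t +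
          ENNReal.ofReal c *
            weaklySingularIntegral (1/4) s (weaklySingularIntegral (1/4) s f) t := by
        rw [lintegral_add_left (by fun_prop), lintegral_const_mul' _ _ ENNReal.ofReal_ne_top,
          lintegral_const_mul' _ _ ENNReal.ofReal_ne_top]
        rfl
    _ ≤ _ := by
        grw [weaklySingularIntegral_rpow_neg_half_le hst,
          weaklySingularIntegral_weaklySingularIntegral_le hf,
          ← ENNReal.ofReal_mul' (by positivity)]

theorem le_of_le_add_weaklySingularIntegral {A : ℝ → ℝ} {s T C₀ c : ℝ} (hA : Measurable A)
    (hA0 : ∀ t ∈ Icc s T, 0 ≤ A t) (hAint : IntegrableOn A (Icc s T)) (hC₀ : 0 ≤ C₀) (hc : 0 ≤ c)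
    (h : ∀ t ∈ Ioc s T, A t ≤ C₀ * (t - s) ^ (-(1/2) : ℝ) +
      c * ∫ θ in s..t, A θ * (t - θ) ^ (-(1/4) : ℝ)) :
    ∀ t ∈ Ioc s T, A t ≤ C₀ * (t - s) ^ (-(1/2) : ℝ) +
      c * (C₀ * (20/3 * (t - s) ^ (1/4 : ℝ)) +
        c * (16/3 * (t - s) ^ (1/2 : ℝ) * ∫ θ in s..t, A θ)) := by
  set f : ℝ → ℝ≥0∞ := fun θ => ENNReal.ofReal (A θ)
  have hf : ∀ t ∈ Ioc s T, f t ≤ ENNReal.ofReal (C₀ * (t - s) ^ (-(1/2) : ℝ)) +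
      ENNReal.ofReal c * weaklySingularIntegral (1/4) s f t := by
    intro t ht
    have hkernel : ENNReal.ofReal (∫ θ in s..t, A θ * (t - θ) ^ (-(1/4) : ℝ)) ≤
        weaklySingularIntegral (1/4) s f t := by
      rw [intervalIntegral.integral_of_le ht.1.le]
      refine (ofReal_integral_le_lintegral_ofReal _).trans_eq
        (setLIntegral_congr_fun measurableSet_Ioc fun θ hθ => ?_)
      exact ENNReal.ofReal_mul (hA0 θ ⟨hθ.1.le, hθ.2.trans ht.2⟩)
    calc f t ≤ ENNReal.ofReal (C₀ * (t - s) ^ (-(1/2) : ℝ)) +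
          ENNReal.ofReal (c * ∫ θ in s..t, A θ * (t - θ) ^ (-(1/4) : ℝ)) :=
        (ENNReal.ofReal_le_ofReal (h t ht)).trans ENNReal.ofReal_add_le
      _ ≤ _ := by grw [ENNReal.ofReal_mul hc, hkernel]
  intro t ht
  have hF0 : 0 ≤ ∫ θ in s..t, A θ :=
    intervalIntegral.integral_nonneg ht.1.le fun θ hθ => hA0 θ ⟨hθ.1, hθ.2.trans ht.2⟩
  have hF : ∫⁻ θ in Ioc s t, f θ = ENNReal.ofReal (∫ θ in s..t, A θ) := by
    rw [intervalIntegral.integral_of_le ht.1.le, ofReal_integral_eq_lintegral_ofReal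
      (hAint.mono_set fun θ hθ => ⟨hθ.1.le, hθ.2.trans ht.2⟩)]
    filter_upwards [ae_restrict_mem measurableSet_Ioc] with θ hθ
    exact hA0 θ ⟨hθ.1.le, hθ.2.trans ht.2⟩
  have hiter := (hf t ht).trans <| add_le_add_right (mul_le_mul_right
    (weaklySingularIntegral_le_of_le hA.ennreal_ofReal ht.1.le
      fun θ hθ => hf θ ⟨hθ.1, hθ.2.trans ht.2⟩) _) _
  have hts : 0 ≤ t - s := sub_nonneg.2 ht.1.le
  refine (ENNReal.ofReal_le_ofReal_iff (by bound)).1 (hiter.trans_eq ?_)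
  rw [hF, ENNReal.ofReal_add, ENNReal.ofReal_mul hc, ENNReal.ofReal_add, ENNReal.ofReal_mul hc,
    ENNReal.ofReal_mul' hF0] <;> bound

theorem le_rpow_neg_half_add_mul_integral {A : ℝ → ℝ} {s T C₀ c : ℝ} (hs : 0 ≤ s)
    (hA : Measurable A) (hA0 : ∀ t ∈ Icc s T, 0 ≤ A t) (hAint : IntegrableOn A (Icc s T))
    (hC₀ : 0 ≤ C₀) (hc : 0 ≤ c)
    (h : ∀ t ∈ Ioc s T, A t ≤ C₀ * (t - s) ^ (-(1/2) : ℝ) +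
      c * ∫ θ in s..t, A θ * (t - θ) ^ (-(1/4) : ℝ)) :
    ∀ t ∈ Ioc s T, A t ≤ (C₀ * (t - s) ^ (-(1/2) : ℝ) + c * (C₀ * (20/3 * T ^ (1/4 : ℝ)))) +
      c * (c * (16/3 * T ^ (1/2 : ℝ))) * ∫ θ in s..t, A θ := by
  intro t ht
  have hts : 0 ≤ t - s := sub_nonneg.2 ht.1.le
  have htsT : t - s ≤ T := by linarith [ht.2]
  have hF0 : 0 ≤ ∫ θ in s..t, A θ :=
    intervalIntegral.integral_nonneg ht.1.le fun θ hθ => hA0 θ ⟨hθ.1, hθ.2.trans ht.2⟩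
  calc A t ≤ C₀ * (t - s) ^ (-(1/2) : ℝ) + c * (C₀ * (20/3 * (t - s) ^ (1/4 : ℝ)) +
        c * (16/3 * (t - s) ^ (1/2 : ℝ) * ∫ θ in s..t, A θ)) :=
      le_of_le_add_weaklySingularIntegral hA hA0 hAint hC₀ hc h t ht
    _ = C₀ * (t - s) ^ (-(1/2) : ℝ) + c * (C₀ * (20/3 * (t - s) ^ (1/4 : ℝ))) +
        c * (c * (16/3 * (t - s) ^ (1/2 : ℝ))) * ∫ θ in s..t, A θ := by ring
    _ ≤ _ := by gcongr

theorem le_mul_exp_of_le_add_mul_integral {u : ℝ → ℝ} {a b δ K : ℝ}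
    (hu : ContinuousOn u (Icc a b)) (hK : 0 ≤ K)
    (h : ∀ x ∈ Icc a b, u x ≤ δ + K * ∫ y in a..x, u y) :
    ∀ x ∈ Icc a b, u x ≤ δ * exp (K * (x - a)) := by
  intro x hx
  set H : ℝ → ℝ := fun x => δ + K * ∫ y in a..x, u y
  have hab : a ≤ b := hx.1.trans hx.2
  have hH : ContinuousOn H (Icc a b) := by
    have := intervalIntegral.continuousOn_primitive_interval'
      (hu.intervalIntegrable_of_Icc (μ := volume) hab) left_mem_uIcc
    exact continuousOn_const.add (continuousOn_const.mul (this.mono Icc_subset_uIcc))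
  have hH' : ∀ y ∈ Ico a b, HasDerivWithinAt H (K * u y) (Ici y) y := by
    intro y hy
    have hnhds : Icc a b ∈ 𝓝[>] y :=
      Filter.mem_of_superset (Ioo_mem_nhdsGT hy.2) fun z hz => ⟨hy.1.trans hz.1.le, hz.2.le⟩
    have := intervalIntegral.integral_hasDerivWithinAt_right (s := Ici y)
      ((hu.mono (Icc_subset_Icc_right hy.2.le)).intervalIntegrable_of_Icc hy.1)
      ((hu.stronglyMeasurableAtFilter_nhdsWithin measurableSet_Icc y).filter_mono
        (nhdsWithin_le_of_mem hnhds))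
      ((hu y (Ico_subset_Icc_self hy)).mono_of_mem_nhdsWithin hnhds)
    exact (this.const_mul K).const_add δ
  have hgron := le_gronwallBound_of_liminf_deriv_right_le (δ := δ) (K := K) (ε := 0) hH
    (fun y hy _ hr => (hH' y hy).liminf_right_slope_le hr) (by simp [H])
    (fun y hy => by simpa using mul_le_mul_of_nonneg_left (h y (Ico_subset_Icc_self hy)) hK)
  simpa only [gronwallBound_ε0] using (h x hx).trans (hgron x hx)

theorem integral_le_mul_exp_of_le_add_mul_integral {A g : ℝ → ℝ} {s T δ L : ℝ}
    (hA : IntegrableOn A (Icc s T)) (hg : IntegrableOn g (Icc s T)) (hL : 0 ≤ L)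
    (hδ : ∀ x ∈ Icc s T, ∫ θ in s..x, g θ ≤ δ)
    (h : ∀ t ∈ Ioc s T, A t ≤ g t + L * ∫ θ in s..t, A θ) :
    ∀ x ∈ Icc s T, ∫ θ in s..x, A θ ≤ δ * exp (L * (x - s)) := by
  intro x hx
  have hsT : s ≤ T := hx.1.trans hx.2
  have hF : ContinuousOn (fun x => ∫ θ in s..x, A θ) (Icc s T) := by
    simpa [uIcc_of_le hsT] using intervalIntegral.continuousOn_primitive_interval'
      ((intervalIntegrable_iff_integrableOn_Icc_of_le hsT).2 hA) left_mem_uIcc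
  refine le_mul_exp_of_le_add_mul_integral hF hL (fun y hy => ?_) x hx
  have hAy : IntervalIntegrable A volume s y :=
    (intervalIntegrable_iff_integrableOn_Icc_of_le hy.1).2 (hA.mono_set (Icc_subset_Icc_right hy.2))
  have hgy : IntervalIntegrable g volume s y :=
    (intervalIntegrable_iff_integrableOn_Icc_of_le hy.1).2 (hg.mono_set (Icc_subset_Icc_right hy.2))
  have hFy : IntervalIntegrable (fun t => ∫ θ in s..t, A θ) volume s y :=
    (hF.mono (Icc_subset_Icc_right hy.2)).intervalIntegrable_of_Icc hy.1
  calc ∫ θ in s..y, A θ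
      ≤ ∫ t in s..y, (g t + L * ∫ θ in s..t, A θ) :=
        intervalIntegral.integral_mono_on_of_le_Ioo hy.1 hAy (hgy.add (hFy.const_mul L))
          fun t ht => h t ⟨ht.1, ht.2.le.trans hy.2⟩
    _ = (∫ t in s..y, g t) + L * ∫ t in s..y, ∫ θ in s..t, A θ := by
        rw [intervalIntegral.integral_add hgy (hFy.const_mul L),
          intervalIntegral.integral_const_mul]
    _ ≤ δ + L * ∫ t in s..y, ∫ θ in s..t, A θ := by grw [hδ y hy]

theorem integral_rpow_neg_half_add_le {s T C₀ M x : ℝ} (hs : 0 ≤ s) (hC₀ : 0 ≤ C₀) (hM : 0 ≤ M)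
    (hx : x ∈ Icc s T) :
    ∫ θ in s..x, (C₀ * (θ - s) ^ (-(1/2) : ℝ) + M) ≤ 2 * C₀ * T ^ (1/2 : ℝ) + M * T := by
  rw [intervalIntegral.integral_add
    ((intervalIntegrable_rpow_sub_left (by norm_num)).const_mul C₀) intervalIntegrable_const,
    intervalIntegral.integral_const_mul, integral_rpow_sub_left (by norm_num),
    intervalIntegral.integral_const, smul_eq_mul]
  have hxs : 0 ≤ x - s := sub_nonneg.2 hx.1
  have hxsT : x - s ≤ T := by linarith [hx.2]
  calc C₀ * ((x - s) ^ (-(1/2) + 1 : ℝ) / (-(1/2) + 1)) + (x - s) * M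
      = 2 * C₀ * (x - s) ^ (1/2 : ℝ) + M * (x - s) := by norm_num; ring
    _ ≤ 2 * C₀ * T ^ (1/2 : ℝ) + M * T := by gcongr

theorem gronwall_weakly_singular_kernel (T C₀ c : ℝ) (hT : 0 < T)
    (hC₀ : 0 ≤ C₀) (hc : 0 ≤ c) :
    ∃ C : ℝ, 0 < C ∧ ∀ s : ℝ, 0 ≤ s → s < T → ∀ A : ℝ → ℝ,
      Measurable A →
      (∀ t ∈ Set.Icc s T, 0 ≤ A t) →
      IntegrableOn A (Set.Icc s T) →
      (∀ t : ℝ, s < t → t ≤ T →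
        A t ≤ C₀ * (t - s) ^ (-(1/2) : ℝ) +
          c * ∫ θ in s..t, A θ * (t - θ) ^ (-(1/4) : ℝ)) →
      ∀ t : ℝ, s < t → t ≤ T → A t ≤ C * (t - s) ^ (-(1/2) : ℝ) := by
  set M := c * (C₀ * (20/3 * T ^ (1/4 : ℝ)))
  set L := c * (c * (16/3 * T ^ (1/2 : ℝ)))
  set B := (2 * C₀ * T ^ (1/2 : ℝ) + M * T) * exp (L * T)
  refine ⟨C₀ + (M + L * B) * T ^ (1/2 : ℝ) + 1, by positivity, ?_⟩
  intro s hs hsT A hA hA0 hAint hAineq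
  have hbound := le_rpow_neg_half_add_mul_integral hs hA hA0 hAint hC₀ hc
    fun t ht => hAineq t ht.1 ht.2
  have hg : IntegrableOn (fun θ => C₀ * (θ - s) ^ (-(1/2) : ℝ) + M) (Icc s T) :=
    (intervalIntegrable_iff_integrableOn_Icc_of_le hsT.le).1
      (((intervalIntegrable_rpow_sub_left (by norm_num)).const_mul C₀).add intervalIntegrable_const)
  have hF : ∀ x ∈ Icc s T, ∫ θ in s..x, A θ ≤ B := fun x hx =>
    (integral_le_mul_exp_of_le_add_mul_integral hAint hg (by positivity)
      (fun y hy => integral_rpow_neg_half_add_le hs hC₀ (by positivity) hy) hbound x hx).trans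
      (by simp only [B]; gcongr; linarith [hx.2])
  intro t hst htT
  have hρ := one_le_rpow_mul_rpow_neg (r := 1/2) (sub_pos.2 hst) (by linarith : t - s ≤ T)
    (by norm_num)
  calc A t ≤ C₀ * (t - s) ^ (-(1/2) : ℝ) + M + L * B := by
        grw [hbound t ⟨hst, htT⟩, hF t ⟨hst.le, htT⟩]
    _ ≤ C₀ * (t - s) ^ (-(1/2) : ℝ) + (M + L * B) * (T ^ (1/2 : ℝ) * (t - s) ^ (-(1/2) : ℝ)) := by
        nlinarith [mul_le_mul_of_nonneg_left hρ (by positivity : 0 ≤ M + L * B)]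
    _ ≤ _ := by linarith [rpow_nonneg (sub_pos.2 hst).le (-(1/2) : ℝ)]
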